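/- arXiv:2511.05436 — 3 statements merged into one kernel-verified Lean document; each statement's English description precedes it below -/
import Mathlib

section
/- Let 𝒜 be a finite index type and d : 𝒜 → ℕ positive dimensions. For each a ∈ 𝒜 let ρ_a and O_a be (d a)×(d a) complex matrices, and set ρ = ⨂_a ρ_a and O = ⨂_a O_a. Suppose c_{p,i} ∈ ℂ for 1 ≤ p ≤ q, 1 ≤ i ≤ m, and suppose for each (p,i) the matrix U_{p,i} (indexed by Π_a Fin (d a)) has the factorized form U_{p,i} = Σ_{α=1}^{ℓ} ⨂_{a} U^a_{p,i,α}, where each U^a_{p,i,α} is a (d a)×(d a) complex matrix. Define Φ(ρ) = Σ_{p=1}^{q} (Σ_{i=1}^{m} c_{p,i} U_{p,i}) ρ (Σ_{j=1}^{m} c_{p,j} U_{p,j})^†. Then Tr(O · Φ(ρ)) = Σ_{p=1}^{q} Σ_{i,j=1}^{m} c_{p,i} conj(c_{p,j}) Σ_{α,α'=1}^{ℓ} ∏_{a ∈ 𝒜} Tr(U^a_{p,i,α} · ρ_a · (U^a_{p,j,α'})^† · O_a). -/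
open Matrix

def tensorFam {𝒜 : Type*} [Fintype 𝒜] [DecidableEq 𝒜] (d : 𝒜 → ℕ)
    (M : ∀ a, Matrix (Fin (d a)) (Fin (d a)) ℂ) :
    Matrix (∀ a, Fin (d a)) (∀ a, Fin (d a)) ℂ :=
  fun x y => ∏ a, M a (x a) (y a)

lemma tensorFam_mul {𝒜 : Type*} [Fintype 𝒜] [DecidableEq 𝒜] (d : 𝒜 → ℕ)
    (M N : ∀ a, Matrix (Fin (d a)) (Fin (d a)) ℂ) :
    tensorFam d M * tensorFam d N = tensorFam d (fun a => M a * N a) := by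
  ext x y
  simp only [tensorFam, Matrix.mul_apply, ← Finset.prod_mul_distrib]
  rw [Finset.prod_univ_sum]
  simp [Fintype.piFinset_univ]

lemma tensorFam_conjTranspose {𝒜 : Type*} [Fintype 𝒜] [DecidableEq 𝒜] (d : 𝒜 → ℕ)
    (M : ∀ a, Matrix (Fin (d a)) (Fin (d a)) ℂ) :
    (tensorFam d M)ᴴ = tensorFam d (fun a => (M a)ᴴ) := by
  ext x y
  simp [tensorFam, conjTranspose_apply, map_prod]

lemma tensorFam_trace {𝒜 : Type*} [Fintype 𝒜] [DecidableEq 𝒜] (d : 𝒜 → ℕ)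
    (M : ∀ a, Matrix (Fin (d a)) (Fin (d a)) ℂ) :
    (tensorFam d M).trace = ∏ a, (M a).trace := by
  simp only [Matrix.trace, Matrix.diag, tensorFam]
  rw [Finset.prod_univ_sum]
  simp [Fintype.piFinset_univ]

lemma key {𝒜 : Type*} [Fintype 𝒜] [DecidableEq 𝒜] (d : 𝒜 → ℕ)
    (A B ρa Oa : ∀ a, Matrix (Fin (d a)) (Fin (d a)) ℂ) :
    (tensorFam d Oa * (tensorFam d A * tensorFam d ρa * (tensorFam d B)ᴴ)).trace
      = ∏ a, (A a * ρa a * (B a)ᴴ * Oa a).trace := by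
  rw [tensorFam_conjTranspose, tensorFam_mul, tensorFam_mul, tensorFam_mul, tensorFam_trace]
  exact Finset.prod_congr rfl fun a _ => by rw [trace_mul_comm]

lemma sum4 {β γ : Type*} [Fintype β] [Fintype γ] {M : Type*} [AddCommMonoid M]
    (f : β → γ → β → γ → M) :
    ∑ j, ∑ α', ∑ i, ∑ α, f j α' i α = ∑ i, ∑ j, ∑ α, ∑ α', f j α' i α := by
  trans ∑ j, ∑ i, ∑ α', ∑ α, f j α' i α
  · exact Finset.sum_congr rfl fun j _ => Finset.sum_comm
  trans ∑ i, ∑ j, ∑ α', ∑ α, f j α' i α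
  · exact Finset.sum_comm
  · exact Finset.sum_congr rfl fun i _ => Finset.sum_congr rfl fun j _ => Finset.sum_comm

/-- If `ρ = ⨂_a ρ_a`, `O = ⨂_a O_a`, each `U_{p,i} = Σ_α ⨂_a U^a_{p,i,α}`,
and `Φ(ρ) = Σ_p (Σ_i c_{p,i} U_{p,i}) ρ (Σ_j c_{p,j} U_{p,j})ᴴ`, then
`Tr(O Φ(ρ)) = Σ_p Σ_{i,j} c_{p,i} conj(c_{p,j}) Σ_{α,α'} ∏_a Tr(U^a_{p,i,α} ρ_a (U^a_{p,j,α'})ᴴ O_a)`. -/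
theorem stmt_3 {𝒜 : Type*} [Fintype 𝒜] [DecidableEq 𝒜] (d : 𝒜 → ℕ)
    (hd : ∀ a, 0 < d a)
    (ρa Oa : ∀ a, Matrix (Fin (d a)) (Fin (d a)) ℂ)
    (ρ O : Matrix (∀ a, Fin (d a)) (∀ a, Fin (d a)) ℂ)
    (hρ : ρ = tensorFam d ρa) (hO : O = tensorFam d Oa)
    (q m ℓ : ℕ)
    (c : Fin q → Fin m → ℂ)
    (U : Fin q → Fin m → Matrix (∀ a, Fin (d a)) (∀ a, Fin (d a)) ℂ)
    (Ul : Fin q → Fin m → Fin ℓ → ∀ a, Matrix (Fin (d a)) (Fin (d a)) ℂ)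
    (hU : ∀ p i, U p i = ∑ α, tensorFam d (Ul p i α))
    (Φ : Matrix (∀ a, Fin (d a)) (∀ a, Fin (d a)) ℂ →
         Matrix (∀ a, Fin (d a)) (∀ a, Fin (d a)) ℂ)
    (hΦ : ∀ σ, Φ σ = ∑ p, (∑ i, c p i • U p i) * σ * (∑ j, c p j • U p j)ᴴ) :
    (O * Φ ρ).trace =
      ∑ p, ∑ i, ∑ j, c p i * (starRingEnd ℂ) (c p j) *
        ∑ α, ∑ α', ∏ a, (Ul p i α a * ρa a * (Ul p j α' a)ᴴ * Oa a).trace := by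
  subst hρ hO
  rw [hΦ]
  simp only [hU, conjTranspose_sum, conjTranspose_smul, Matrix.mul_sum, Matrix.sum_mul,
    smul_mul_assoc, mul_smul_comm, trace_sum, trace_smul, key, smul_eq_mul]
  refine Finset.sum_congr rfl fun p _ => ?_
  simp only [Finset.mul_sum]
  rw [sum4]
  refine Finset.sum_congr rfl fun i _ => Finset.sum_congr rfl fun j _ =>
    Finset.sum_congr rfl fun α _ => Finset.sum_congr rfl fun α' _ => ?_
  rw [starRingEnd_apply]
  ring
end

section
/- For every real number x, ∫_{k ∈ ℝ} (π·(1 + k²))⁻¹ · exp(−i·k·x) dk = exp(−|x|), where the integral is a Lebesgue integral of a complex-valued function and exp is the complex exponential. -/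
open MeasureTheory Real Set Filter FourierTransform
open scoped Topology

private lemma aux_cexp_tendsto_zero {a : ℂ} (ha : 0 < a.re) :
    Tendsto (fun T : ℝ => Complex.exp (-(a * T))) atTop (𝓝 0) := by
  rw [tendsto_zero_iff_norm_tendsto_zero]
  have h : ∀ T : ℝ, ‖Complex.exp (-(a * T))‖ = Real.exp (-a.re * T) := by
    intro T
    rw [Complex.norm_exp]
    congr 1
    simp [Complex.mul_re]
  simp_rw [h]
  have : Tendsto (fun T : ℝ => -a.re * T) atTop atBot :=
    tendsto_id.const_mul_atTop_of_neg (neg_neg_iff_pos.mpr ha)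
  exact Real.tendsto_exp_atBot.comp this

private lemma aux_integral_cexp_neg_mul_Ioi {a : ℂ} (ha : 0 < a.re) :
    ∫ x : ℝ in Ioi (0:ℝ), Complex.exp (-(a * x)) = a⁻¹ := by
  have ha0 : a ≠ 0 := fun h => by simp [h] at ha
  have hInt : IntegrableOn (fun x : ℝ => Complex.exp (-(a * x))) (Ioi 0) := by
    refine (exp_neg_integrableOn_Ioi 0 ha).mono' ?_ ?_
    · exact (Complex.continuous_exp.comp
        ((continuous_const.mul Complex.continuous_ofReal).neg)).aestronglyMeasurable
    · filter_upwards with x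
      rw [Complex.norm_exp]
      simp [Complex.mul_re]
  have h1 := intervalIntegral_tendsto_integral_Ioi 0 hInt tendsto_id
  have h2 : Tendsto (fun T : ℝ => ∫ x in (0:ℝ)..T, Complex.exp (-(a * x))) atTop (𝓝 a⁻¹) := by
    have heq : ∀ T : ℝ, (∫ x in (0:ℝ)..T, Complex.exp (-(a * x)))
        = (1 - Complex.exp (-(a * T))) * a⁻¹ := by
      intro T
      have : (fun x : ℝ => Complex.exp (-(a * x))) = fun x : ℝ => Complex.exp ((-a) * x) := by
        ext x; ring_nf
      rw [this, integral_exp_mul_complex (neg_ne_zero.mpr ha0)]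
      rw [mul_comm, Complex.ofReal_zero, mul_zero, Complex.exp_zero]
      rw [mul_comm a T, div_neg, div_eq_mul_inv]
      ring
    simp_rw [heq]
    have h3 : Tendsto (fun T : ℝ => ((1 : ℂ) - Complex.exp (-(a * T))) * a⁻¹) atTop
        (𝓝 ((1 - 0) * a⁻¹)) :=
      ((tendsto_const_nhds (x := (1:ℂ))).sub (aux_cexp_tendsto_zero ha)).mul tendsto_const_nhds
    simpa using h3
  exact tendsto_nhds_unique (by simpa using h1) h2

private noncomputable def auxF : ℝ → ℂ := fun v => Complex.exp (-(|v| : ℝ))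

private lemma auxF_cont : Continuous auxF :=
  Complex.continuous_exp.comp ((Complex.continuous_ofReal.comp continuous_abs).neg)

private lemma auxF_int : Integrable auxF := by
  have hR : Integrable (fun v : ℝ => Real.exp (-|v|)) := by
    rw [← integrableOn_univ, ← Iic_union_Ioi (a := (0:ℝ))]
    apply IntegrableOn.union
    · exact (integrableOn_exp_Iic 0).congr_fun
        (fun v hv => by rw [abs_of_nonpos hv, neg_neg]) measurableSet_Iic
    · exact (exp_neg_integrableOn_Ioi 0 one_pos).congr_fun
        (fun v hv => by rw [abs_of_pos hv]; simp only [neg_one_mul]) measurableSet_Ioi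
  have h2 : Integrable (fun v : ℝ => ((Real.exp (-|v|) : ℝ) : ℂ)) := hR.ofReal
  apply h2.congr
  filter_upwards with v
  rw [auxF, Complex.ofReal_exp, Complex.ofReal_neg]

private lemma auxF_fourier (w : ℝ) :
    𝓕 auxF w = 2 / (1 + ((2 * π * w : ℝ) : ℂ) ^ 2) := by
  set c : ℂ := 1 + ((2 * π * w : ℝ) : ℂ) * Complex.I with hc_def
  set c' : ℂ := 1 - ((2 * π * w : ℝ) : ℂ) * Complex.I with hc'_def
  have hcre : 0 < c.re := by simp [hc_def]
  have hc're : 0 < c'.re := by simp [hc'_def]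
  have hc0 : c ≠ 0 := fun h => by simp [h] at hcre
  have hc'0 : c' ≠ 0 := fun h => by simp [h] at hc're
  set G : ℝ → ℂ := fun v => Complex.exp (((-2 * π * v * w : ℝ) : ℂ) * Complex.I) • auxF v
    with hG_def
  have hG_int : Integrable G := by
    apply auxF_int.bdd_mul (c := 1)
    · exact ((Complex.continuous_ofReal.comp (by fun_prop)).mul
        continuous_const).cexp.aestronglyMeasurable
    · filter_upwards with v
      rw [Complex.norm_exp]
      simp
  have hIoi : ∫ v in Ioi (0:ℝ), G v = c⁻¹ := by
    rw [← aux_integral_cexp_neg_mul_Ioi hcre]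
    apply setIntegral_congr_fun measurableSet_Ioi
    intro v hv
    have hav : |v| = v := abs_of_pos hv
    rw [hG_def]
    simp only [smul_eq_mul, auxF, ← Complex.exp_add]
    congr 1
    rw [hav, hc_def]
    push_cast
    ring
  have hIic : ∫ v in Iic (0:ℝ), G v = c'⁻¹ := by
    have h0 : Iic (0:ℝ) = Iic (-0) := by norm_num
    rw [h0, ← integral_comp_neg_Ioi, ← aux_integral_cexp_neg_mul_Ioi hc're]
    apply setIntegral_congr_fun measurableSet_Ioi
    intro v hv
    have hav : |(-v)| = v := by rw [abs_neg, abs_of_pos hv]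
    rw [hG_def]
    simp only [smul_eq_mul, auxF, ← Complex.exp_add]
    congr 1
    rw [hav, hc'_def]
    push_cast
    ring
  have hsplit : (∫ v in Iic (0:ℝ), G v) + (∫ v in Ioi (0:ℝ), G v) = ∫ v : ℝ, G v := by
    have := integral_add_compl (measurableSet_Iic (a := (0:ℝ))) hG_int
    rwa [compl_Iic] at this
  have hfour : 𝓕 auxF w = ∫ v : ℝ, G v :=
    Real.fourier_real_eq_integral_exp_smul auxF w
  rw [hfour, ← hsplit, hIic, hIoi]
  have hmul : c' * c = 1 + ((2 * π * w : ℝ) : ℂ) ^ 2 := by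
    rw [hc_def, hc'_def]
    have : Complex.I ^ 2 = -1 := Complex.I_sq
    ring_nf
    rw [this]
    ring
  rw [inv_add_inv hc'0 hc0, hmul]
  congr 1
  rw [hc_def, hc'_def]
  ring

/-- The Fourier transform of the Cauchy–Lorentz kernel:
`∫_{k ∈ ℝ} (π(1+k²))⁻¹ exp(−i k x) dk = exp(−|x|)` for every real `x`. -/
theorem stmt_11 (x : ℝ) :
    ∫ k : ℝ, ((π * (1 + k ^ 2) : ℝ) : ℂ)⁻¹ *
        Complex.exp (-(Complex.I * (k : ℂ) * (x : ℂ))) =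
      Complex.exp (-(|x| : ℝ)) := by
  have h2pi : (0:ℝ) < 2 * π := by positivity
  -- integrability of the Fourier transform
  have hg_int : Integrable (𝓕 auxF) := by
    have h1 : Integrable (fun w : ℝ => (1 + (2 * π * w) ^ 2)⁻¹) := by
      have := integrable_inv_one_add_sq.comp_mul_left' (R := 2 * π) h2pi.ne'
      simpa using this
    have h2 : Integrable (fun w : ℝ => (((2 : ℝ) * (1 + (2 * π * w) ^ 2)⁻¹ : ℝ) : ℂ)) :=
      (h1.const_mul 2).ofReal
    apply h2.congr
    filter_upwards with w
    rw [auxF_fourier w]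
    push_cast
    rw [div_eq_mul_inv]
  -- Fourier inversion at the point -x
  have hinv : 𝓕⁻ (𝓕 auxF) (-x) = auxF (-x) :=
    auxF_int.fourierInv_fourier_eq hg_int (auxF_cont.continuousAt)
  rw [Real.fourierInv_eq_fourier_neg, neg_neg] at hinv
  -- change of variables in the target integral
  set F : ℝ → ℂ := fun k => ((π * (1 + k ^ 2) : ℝ) : ℂ)⁻¹ *
      Complex.exp (-(Complex.I * (k : ℂ) * (x : ℂ))) with hF_def
  have hchg : (∫ w : ℝ, F (2 * π * w)) = |(2 * π)⁻¹| • ∫ k : ℝ, F k :=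
    MeasureTheory.Measure.integral_comp_mul_left F (2 * π)
  have habs : |(2 * π)⁻¹| = (2 * π)⁻¹ := abs_of_pos (by positivity)
  have hmain : (∫ k : ℝ, F k) = (2 * π) • ∫ w : ℝ, F (2 * π * w) := by
    rw [hchg, habs, smul_smul, mul_inv_cancel₀ h2pi.ne', one_smul]
  -- identify the substituted integral with 𝓕 (𝓕 auxF) x
  have hfou : 𝓕 (𝓕 auxF) x = ∫ w : ℝ, ((2 * π : ℝ)) • F (2 * π * w) := by
    rw [Real.fourier_real_eq_integral_exp_smul]
    apply integral_congr_ae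
    filter_upwards with w
    rw [auxF_fourier w]
    simp only [hF_def, smul_eq_mul, Complex.real_smul]
    have hpos : (0:ℝ) < 1 + (2 * π * w) ^ 2 := by positivity
    have hr : (2 * π) * (π * (1 + (2 * π * w) ^ 2))⁻¹ = 2 / (1 + (2 * π * w) ^ 2) := by
      field_simp
    have hscal : ((2 * π : ℝ) : ℂ) * ((π * (1 + (2 * π * w) ^ 2) : ℝ) : ℂ)⁻¹
        = 2 / (1 + ((2 * π * w : ℝ) : ℂ) ^ 2) := by
      calc ((2 * π : ℝ) : ℂ) * ((π * (1 + (2 * π * w) ^ 2) : ℝ) : ℂ)⁻¹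
          = (((2 * π) * (π * (1 + (2 * π * w) ^ 2))⁻¹ : ℝ) : ℂ) := by push_cast; ring
        _ = ((2 / (1 + (2 * π * w) ^ 2) : ℝ) : ℂ) := by rw [hr]
        _ = 2 / (1 + ((2 * π * w : ℝ) : ℂ) ^ 2) := by push_cast; ring
    have hexp : Complex.exp (-(Complex.I * ((2 * π * w : ℝ) : ℂ) * (x : ℂ)))
        = Complex.exp (((-2 * π * w * x : ℝ) : ℂ) * Complex.I) := by
      congr 1
      push_cast
      ring
    rw [hexp, ← mul_assoc, hscal]
    ring
  rw [show (∫ k : ℝ, ((π * (1 + k ^ 2) : ℝ) : ℂ)⁻¹ *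
        Complex.exp (-(Complex.I * (k : ℂ) * (x : ℂ)))) = ∫ k : ℝ, F k from rfl]
  rw [hmain, ← integral_smul, ← hfou, hinv, auxF, abs_neg]
end

section
/- Let H be an n×n Hermitian complex matrix with least eigenvalue λ₀, let P₀ denote the orthogonal projection of ℂⁿ onto the eigenspace ker(H − λ₀·I), and let v ∈ ℂⁿ satisfy P₀ v ≠ 0. Then as T → ∞: (1) exp(−T·H)·v ≠ 0 for all T, and the normalized imaginary-time-evolved vector exp(−T·H)·v / ‖exp(−T·H)·v‖ converges to the normalized ground-state component P₀v/‖P₀v‖; and (2) the energy expectation ⟨exp(−T·H)·v, H·(exp(−T·H)·v)⟩ / ‖exp(−T·H)·v‖² converges to λ₀. -/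
open Matrix Filter

noncomputable section

/-- The standard inner product `⟨x, y⟩ = Σ_q conj(x_q)·y_q`, conjugate-linear in the
first argument. -/
def innerC {ι : Type*} [Fintype ι] (x y : ι → ℂ) : ℂ :=
  ∑ q, (starRingEnd ℂ) (x q) * y q

/-- The norm induced by `innerC`. -/
def normC {ι : Type*} [Fintype ι] (x : ι → ℂ) : ℝ :=
  Real.sqrt (innerC x x).re

variable {ι : Type*} [Fintype ι]

lemma innerC_eq_dot (x y : ι → ℂ) : innerC x y = star x ⬝ᵥ y := by
  simp only [innerC, dotProduct, Pi.star_apply, starRingEnd_apply]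

lemma innerC_mulVec_left (A : Matrix ι ι ℂ) (x y : ι → ℂ) :
    innerC (A *ᵥ x) y = innerC x (Aᴴ *ᵥ y) := by
  rw [innerC_eq_dot, innerC_eq_dot, star_mulVec, ← dotProduct_mulVec]

lemma innerC_smul_right (a : ℂ) (x y : ι → ℂ) :
    innerC x (a • y) = a * innerC x y := by
  simp only [innerC, Pi.smul_apply, smul_eq_mul, Finset.mul_sum]
  exact Finset.sum_congr rfl fun q _ => by ring

lemma innerC_smul_left (a : ℂ) (x y : ι → ℂ) :
    innerC (a • x) y = (starRingEnd ℂ) a * innerC x y := by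
  simp only [innerC, Pi.smul_apply, smul_eq_mul, Finset.mul_sum, RingHom.map_mul]
  exact Finset.sum_congr rfl fun q _ => by ring

lemma innerC_self_eq (x : ι → ℂ) :
    innerC x x = ((∑ q, Complex.normSq (x q) : ℝ) : ℂ) := by
  unfold innerC
  push_cast
  refine Finset.sum_congr rfl fun q _ => ?_
  rw [← Complex.normSq_eq_conj_mul_self]

lemma innerC_self_re (x : ι → ℂ) :
    (innerC x x).re = ∑ q, Complex.normSq (x q) := by
  rw [innerC_self_eq]; simp

lemma normC_sq (x : ι → ℂ) : ((normC x : ℝ) : ℂ) ^ 2 = innerC x x := by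
  have h : (0:ℝ) ≤ ∑ q, Complex.normSq (x q) :=
    Finset.sum_nonneg fun q _ => Complex.normSq_nonneg _
  unfold normC
  rw [innerC_self_re, innerC_self_eq]
  rw [← Complex.ofReal_pow, Real.sq_sqrt h]

lemma normC_eq_zero_iff (x : ι → ℂ) : normC x = 0 ↔ x = 0 := by
  have h : ∀ q ∈ (Finset.univ : Finset ι), (0:ℝ) ≤ Complex.normSq (x q) :=
    fun q _ => Complex.normSq_nonneg _
  unfold normC
  rw [innerC_self_re, Real.sqrt_eq_zero (Finset.sum_nonneg h),
    Finset.sum_eq_zero_iff_of_nonneg h]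
  constructor
  · intro hq; funext q; exact Complex.normSq_eq_zero.mp (hq q (Finset.mem_univ q))
  · intro hx q _; rw [hx]; simp

lemma innerC_self_eq_zero (x : ι → ℂ) (h : innerC x x = 0) : x = 0 := by
  rw [← normC_eq_zero_iff]
  unfold normC
  rw [h]; simp

lemma normC_smul (r : ℝ) (hr : 0 ≤ r) (x : ι → ℂ) :
    normC ((r : ℂ) • x) = r * normC x := by
  unfold normC
  have h : innerC ((r:ℂ) • x) ((r:ℂ) • x) = ((r^2 : ℝ) : ℂ) * innerC x x := by
    rw [innerC_smul_right, innerC_smul_left, Complex.conj_ofReal]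
    push_cast; ring
  rw [h, Complex.re_ofReal_mul, Real.sqrt_mul (sq_nonneg r), Real.sqrt_sq hr]

lemma continuous_innerC_mulVec (M : Matrix ι ι ℂ) :
    Continuous fun x : ι → ℂ => innerC x (M *ᵥ x) := by
  unfold innerC mulVec dotProduct
  simp only [starRingEnd_apply]
  refine continuous_finset_sum _ fun q _ => Continuous.mul ?_ ?_
  · exact continuous_star.comp (continuous_apply q)
  · exact continuous_finset_sum _ fun j _ => continuous_const.mul (continuous_apply j)

lemma continuous_normC : Continuous (normC : (ι → ℂ) → ℝ) := by
  unfold normC innerC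
  simp only [starRingEnd_apply]
  exact Real.continuous_sqrt.comp (Complex.continuous_re.comp
    (continuous_finset_sum _ fun q _ =>
      (continuous_star.comp (continuous_apply q)).mul (continuous_apply q)))

lemma diagMV {m : Type*} [Fintype m] [DecidableEq m] (d x : m → ℂ) :
    Matrix.diagonal d *ᵥ x = fun i => d i * x i := by
  funext i
  rw [mulVec_diagonal]


/-- Imaginary-time evolution converges to the ground state: if `H` is
Hermitian with least eigenvalue `λ₀`, `P₀` is the orthogonal projection onto
`ker(H − λ₀ I)`, and `P₀ v ≠ 0`, then `exp(−T H) v ≠ 0` for all `T`, the normalized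
vector `exp(−T H) v / ‖exp(−T H) v‖` tends to `P₀ v / ‖P₀ v‖` as `T → ∞`, and the
energy expectation `⟨exp(−T H) v, H exp(−T H) v⟩ / ‖exp(−T H) v‖²` tends to `λ₀`. -/
theorem stmt_16 (n : ℕ) (H : Matrix (Fin n) (Fin n) ℂ) (hH : H.IsHermitian)
    (lam : ℝ)
    (hmem : (lam : ℂ) ∈ spectrum ℂ H)
    (hleast : ∀ μ : ℝ, (μ : ℂ) ∈ spectrum ℂ H → lam ≤ μ)
    (P₀ : Matrix (Fin n) (Fin n) ℂ)
    (hP₀herm : P₀ᴴ = P₀) (hP₀idem : P₀ * P₀ = P₀)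
    (hP₀range : ∀ w : Fin n → ℂ, H.mulVec (P₀.mulVec w) = (lam : ℂ) • P₀.mulVec w)
    (hP₀fix : ∀ w : Fin n → ℂ, H.mulVec w = (lam : ℂ) • w → P₀.mulVec w = w)
    (v : Fin n → ℂ) (hv : P₀.mulVec v ≠ 0) :
    (∀ T : ℝ, (NormedSpace.exp ((-(T : ℂ)) • H)).mulVec v ≠ 0) ∧
    Tendsto (fun T : ℝ =>
        ((normC ((NormedSpace.exp ((-(T : ℂ)) • H)).mulVec v) : ℂ))⁻¹ •
          (NormedSpace.exp ((-(T : ℂ)) • H)).mulVec v) atTop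
      (nhds (((normC (P₀.mulVec v) : ℂ))⁻¹ • P₀.mulVec v)) ∧
    Tendsto (fun T : ℝ =>
        innerC ((NormedSpace.exp ((-(T : ℂ)) • H)).mulVec v)
            (H.mulVec ((NormedSpace.exp ((-(T : ℂ)) • H)).mulVec v)) /
          ((normC ((NormedSpace.exp ((-(T : ℂ)) • H)).mulVec v) : ℂ) ^ 2)) atTop
      (nhds (lam : ℂ)) := by
  classical
  set ε : Fin n → ℝ := hH.eigenvalues with hεdef
  set U : Matrix (Fin n) (Fin n) ℂ := (hH.eigenvectorUnitary : Matrix (Fin n) (Fin n) ℂ)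
    with hUdef
  have hU1 : star U * U = 1 := Matrix.mem_unitaryGroup_iff'.mp hH.eigenvectorUnitary.2
  have hU2 : U * star U = 1 := Matrix.mem_unitaryGroup_iff.mp hH.eigenvectorUnitary.2
  have hspec : H = U * diagonal (fun i => (ε i : ℂ)) * star U := by
    simpa [hUdef, hεdef, Function.comp_def] using hH.spectral_theorem
  have hUst : ∀ x : Fin n → ℂ, star U *ᵥ (U *ᵥ x) = x := fun x => by
    rw [mulVec_mulVec, hU1, one_mulVec]
  have hUst' : ∀ x : Fin n → ℂ, U *ᵥ (star U *ᵥ x) = x := fun x => by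
    rw [mulVec_mulVec, hU2, one_mulVec]
  have hUinj : ∀ x : Fin n → ℂ, U *ᵥ x = 0 → x = 0 := fun x hx => by
    have h := congrArg (fun y => star U *ᵥ y) hx
    simpa [hUst] using h
  have hUinj2 : ∀ x y : Fin n → ℂ, U *ᵥ x = U *ᵥ y → x = y := by
    intro x y hxy
    have h := hUinj (x - y) (by rw [Matrix.mulVec_sub, hxy, sub_self])
    rwa [sub_eq_zero] at h
  -- all eigenvalues are ≥ lam
  have hεlam : ∀ i, lam ≤ ε i := fun i => by
    refine hleast (ε i) ?_
    have h := hH.eigenvalues_mem_spectrum_real i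
    have := spectrum.algebraMap_mem ℂ h
    simpa [Complex.coe_algebraMap] using this
  -- the exponential formula
  have hUu : IsUnit U := ⟨⟨U, star U, hU2, hU1⟩, rfl⟩
  have hUinv : U⁻¹ = star U := inv_eq_left_inv hU1
  have hexp : ∀ T : ℝ, NormedSpace.exp ((-(T : ℂ)) • H)
      = U * diagonal (fun i => Complex.exp (-(T : ℂ) * ε i)) * star U := by
    intro T
    have h1 : (-(T : ℂ)) • H = U * diagonal (fun i => -(T : ℂ) * (ε i : ℂ)) * U⁻¹ := by
      rw [hUinv, hspec, ← Matrix.smul_mul, ← Matrix.mul_smul, ← diagonal_smul]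
      congr 2
    rw [h1, Matrix.exp_conj U _ hUu, Matrix.exp_diagonal, hUinv, Pi.exp_def,
      ← Complex.exp_eq_exp_ℂ]
  set c : Fin n → ℂ := star U *ᵥ v with hcdef
  have hA : ∀ T : ℝ, (NormedSpace.exp ((-(T : ℂ)) • H)) *ᵥ v
      = U *ᵥ (fun i => Complex.exp (-(T : ℂ) * ε i) * c i) := by
    intro T
    rw [hexp T, ← mulVec_mulVec, ← mulVec_mulVec, ← hcdef, diagMV]
  set χ : Fin n → ℂ := fun i => if ε i = lam then 1 else 0 with hχdef
  set Q : Matrix (Fin n) (Fin n) ℂ := U * diagonal χ * star U with hQdef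
  have hQv : ∀ x : Fin n → ℂ, Q *ᵥ x = U *ᵥ (fun i => χ i * (star U *ᵥ x) i) := by
    intro x
    rw [hQdef, ← mulVec_mulVec, ← mulVec_mulVec, diagMV]
  have hQherm : Qᴴ = Q := by
    rw [hQdef, conjTranspose_mul, conjTranspose_mul, diagonal_conjTranspose]
    have h1 : (star U)ᴴ = U := by
      rw [← star_eq_conjTranspose, star_star]
    have h2 : star χ = χ := by
      funext i
      by_cases h : ε i = lam <;> simp [hχdef, h]
    rw [h1, ← star_eq_conjTranspose, h2, mul_assoc]
  have hHU : ∀ x : Fin n → ℂ, H *ᵥ x = U *ᵥ (fun i => (ε i : ℂ) * (star U *ᵥ x) i) := by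
    intro x
    rw [hspec, ← mulVec_mulVec, ← mulVec_mulVec, diagMV]
  have fact1 : ∀ x : Fin n → ℂ, H *ᵥ x = (lam : ℂ) • x → Q *ᵥ x = x := by
    intro x hx
    set y : Fin n → ℂ := star U *ᵥ x with hy
    have hxy : U *ᵥ y = x := hUst' x
    have hDy : (fun i => (ε i : ℂ) * y i) = (lam : ℂ) • y := by
      apply hUinj2
      rw [mulVec_smul, hxy, ← hHU x, hx]
    have hfix : (fun i => χ i * y i) = y := by
      funext i
      by_cases h : ε i = lam
      · simp [hχdef, h]
      · have h1 : (ε i : ℂ) * y i = (lam : ℂ) * y i := by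
          have := congrFun hDy i
          simpa using this
        have h2 : ((ε i : ℂ) - (lam : ℂ)) * y i = 0 := by
          linear_combination h1
        have h0 : y i = 0 := by
          rcases mul_eq_zero.mp h2 with h3 | h3
          · exfalso
            apply h
            have h4 : (ε i : ℂ) = (lam : ℂ) := by linear_combination h3
            exact_mod_cast h4
          · exact h3
        simp [hχdef, h, h0]
    rw [hQv, ← hy, hfix, hxy]
  have fact2 : ∀ x : Fin n → ℂ, H *ᵥ (Q *ᵥ x) = (lam : ℂ) • (Q *ᵥ x) := by
    intro x
    rw [hQv x, hHU, hUst, ← mulVec_smul]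
    refine congrArg (fun z => U *ᵥ z) ?_
    funext i
    simp only [Pi.smul_apply, smul_eq_mul]
    by_cases h : ε i = lam
    · rw [h]
    · simp [hχdef, h]
  -- P₀ v = Q v
  have hadjP : ∀ x y : Fin n → ℂ, innerC (P₀ *ᵥ x) y = innerC x (P₀ *ᵥ y) := by
    intro x y
    rw [innerC_mulVec_left, hP₀herm]
  have hadjQ : ∀ x y : Fin n → ℂ, innerC (Q *ᵥ x) y = innerC x (Q *ᵥ y) := by
    intro x y
    rw [innerC_mulVec_left, hQherm]
  set w : Fin n → ℂ := v - P₀ *ᵥ v with hwdef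
  have hPw : P₀ *ᵥ w = 0 := by
    rw [hwdef, Matrix.mulVec_sub, mulVec_mulVec, hP₀idem, sub_self]
  have hQw : Q *ᵥ w = 0 := by
    apply innerC_self_eq_zero
    have h1 : Q *ᵥ (Q *ᵥ w) = Q *ᵥ w := fact1 _ (fact2 w)
    have h2 : P₀ *ᵥ (Q *ᵥ w) = Q *ᵥ w := hP₀fix _ (fact2 w)
    calc innerC (Q *ᵥ w) (Q *ᵥ w) = innerC w (Q *ᵥ (Q *ᵥ w)) := hadjQ _ _
      _ = innerC w (Q *ᵥ w) := by rw [h1]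
      _ = innerC w (P₀ *ᵥ (Q *ᵥ w)) := by rw [h2]
      _ = innerC (P₀ *ᵥ w) (Q *ᵥ w) := (hadjP _ _).symm
      _ = 0 := by rw [hPw]; simp [innerC]
  have hPv : P₀ *ᵥ v = Q *ᵥ v := by
    have hsplit : P₀ *ᵥ v + w = v := by rw [hwdef]; ring
    calc P₀ *ᵥ v = Q *ᵥ (P₀ *ᵥ v) := (fact1 _ (hP₀range v)).symm
      _ = Q *ᵥ (P₀ *ᵥ v) + Q *ᵥ w := by rw [hQw, add_zero]
      _ = Q *ᵥ (P₀ *ᵥ v + w) := by rw [Matrix.mulVec_add]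
      _ = Q *ᵥ v := by rw [hsplit]
  set L : Fin n → ℂ := U *ᵥ (fun i => χ i * c i) with hLdef
  have hPvL : P₀ *ᵥ v = L := by rw [hPv, hQv, hLdef, ← hcdef]
  have hLne : L ≠ 0 := hPvL ▸ hv
  have hcne : c ≠ 0 := by
    intro h0
    apply hLne
    rw [hLdef, h0]
    have h1 : (fun i => χ i * (0 : Fin n → ℂ) i) = (0 : Fin n → ℂ) := by funext i; simp
    rw [h1, mulVec_zero]
  -- Part 1
  have part1 : ∀ T : ℝ, (NormedSpace.exp ((-(T : ℂ)) • H)) *ᵥ v ≠ 0 := by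
    intro T h0
    rw [hA T] at h0
    have h1 := hUinj _ h0
    apply hcne
    funext i
    have h2 := congrFun h1 i
    simpa [Complex.exp_ne_zero] using h2
  -- the rescaled evolution
  set A : ℝ → (Fin n → ℂ) := fun T => (NormedSpace.exp ((-(T : ℂ)) • H)) *ᵥ v with hAdef
  set f : ℝ → (Fin n → ℂ) := fun T => ((Real.exp (T * lam) : ℝ) : ℂ) • A T with hfdef
  have hf : ∀ T : ℝ, f T = U *ᵥ (fun i => ((Real.exp (T * (lam - ε i)) : ℝ) : ℂ) * c i) := by
    intro T
    show ((Real.exp (T * lam) : ℝ) : ℂ) • A T = _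
    have hAT : A T = U *ᵥ (fun i => Complex.exp (-(T : ℂ) * ε i) * c i) := hA T
    rw [hAT, ← mulVec_smul]
    refine congrArg (fun z => U *ᵥ z) ?_
    funext i
    simp only [Pi.smul_apply, smul_eq_mul]
    rw [Complex.ofReal_exp, Complex.ofReal_exp, ← mul_assoc, ← Complex.exp_add]
    congr 2
    push_cast
    ring
  -- coordinatewise convergence
  have hlimcoord : Tendsto (fun T : ℝ => (fun i => ((Real.exp (T * (lam - ε i)) : ℝ) : ℂ) * c i))
      atTop (nhds (fun i => χ i * c i)) := by
    rw [tendsto_pi_nhds]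
    intro i
    by_cases h : ε i = lam
    · have heq : (fun T : ℝ => ((Real.exp (T * (lam - ε i)) : ℝ) : ℂ) * c i)
          = fun _ => χ i * c i := by
        funext T
        simp [h, hχdef]
      rw [heq]
      exact tendsto_const_nhds
    · have hlt : lam - ε i < 0 := by
        have := lt_of_le_of_ne (hεlam i) (fun hc => h hc.symm)
        linarith
      have h1 : Tendsto (fun T : ℝ => T * (lam - ε i)) atTop atBot :=
        Tendsto.atTop_mul_const_of_neg hlt tendsto_id
      have h2 : Tendsto (fun T : ℝ => Real.exp (T * (lam - ε i))) atTop (nhds 0) :=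
        Real.tendsto_exp_atBot.comp h1
      have h3 : Tendsto (fun T : ℝ => ((Real.exp (T * (lam - ε i)) : ℝ) : ℂ)) atTop
          (nhds ((0 : ℝ) : ℂ)) :=
        (Complex.continuous_ofReal.tendsto 0).comp h2
      have h4 := h3.mul_const (c i)
      simpa [hχdef, h] using h4
  have hUcont : Continuous fun x : Fin n → ℂ => U *ᵥ x := by
    have h := LinearMap.continuous_of_finiteDimensional (Matrix.mulVecLin U)
    exact h
  have hlimf : Tendsto f atTop (nhds L) := by
    have heq : f = fun T => U *ᵥ (fun i => ((Real.exp (T * (lam - ε i)) : ℝ) : ℂ) * c i) :=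
      funext hf
    rw [heq, hLdef]
    exact (hUcont.tendsto _).comp hlimcoord
  -- norms
  have hnormL : normC L ≠ 0 := fun h => hLne ((normC_eq_zero_iff L).mp h)
  have hexpTpos : ∀ T : ℝ, (0 : ℝ) < Real.exp (T * lam) := fun T => Real.exp_pos _
  have hnormf : ∀ T : ℝ, normC (f T) = Real.exp (T * lam) * normC (A T) :=
    fun T => normC_smul _ (hexpTpos T).le _
  -- Part 2
  have part2 : Tendsto (fun T : ℝ => ((normC (A T) : ℂ))⁻¹ • A T) atTop
      (nhds (((normC L : ℂ))⁻¹ • L)) := by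
    have hcont : ContinuousAt (fun x : Fin n → ℂ => ((normC x : ℂ))⁻¹ • x) L := by
      refine ContinuousAt.fun_smul (ContinuousAt.inv₀ ?_ ?_) continuousAt_id
      · exact (Complex.continuous_ofReal.comp continuous_normC).continuousAt
      · intro h
        exact hnormL (by exact_mod_cast h)
    have hmain : Tendsto (fun T : ℝ => ((normC (f T) : ℂ))⁻¹ • f T) atTop
        (nhds (((normC L : ℂ))⁻¹ • L)) := hcont.tendsto.comp hlimf
    have heq : (fun T : ℝ => ((normC (f T) : ℂ))⁻¹ • f T)
        = fun T : ℝ => ((normC (A T) : ℂ))⁻¹ • A T := by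
      funext T
      have hr : ((Real.exp (T * lam) : ℝ) : ℂ) ≠ 0 := by
        exact_mod_cast (hexpTpos T).ne'
      have hfT : f T = ((Real.exp (T * lam) : ℝ) : ℂ) • A T := rfl
      rw [hnormf T, hfT, smul_smul, Complex.ofReal_mul, mul_inv,
        mul_comm (((Real.exp (T * lam) : ℝ) : ℂ)⁻¹), mul_assoc, inv_mul_cancel₀ hr, mul_one]
    rw [← heq]
    exact hmain
  -- Part 3
  have hHL : H *ᵥ L = (lam : ℂ) • L := by
    rw [← hPvL]
    exact hP₀range v
  have hGL : innerC L (H *ᵥ L) / ((normC L : ℂ)) ^ 2 = (lam : ℂ) := by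
    rw [hHL, innerC_smul_right, normC_sq, mul_div_assoc, div_self, mul_one]
    intro h
    exact hLne (innerC_self_eq_zero _ h)
  have part3 : Tendsto (fun T : ℝ => innerC (A T) (H *ᵥ A T) / ((normC (A T) : ℂ)) ^ 2) atTop
      (nhds (lam : ℂ)) := by
    have hcont : ContinuousAt
        (fun x : Fin n → ℂ => innerC x (H *ᵥ x) / ((normC x : ℂ)) ^ 2) L := by
      refine ContinuousAt.div ?_ ?_ ?_
      · exact (continuous_innerC_mulVec H).continuousAt
      · exact ((Complex.continuous_ofReal.comp continuous_normC).pow 2).continuousAt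
      · intro h
        have h1 : ((normC L : ℝ) : ℂ) = 0 := (pow_eq_zero_iff two_ne_zero).mp h
        exact hnormL (by exact_mod_cast h1)
    have hmain : Tendsto (fun T : ℝ => innerC (f T) (H *ᵥ f T) / ((normC (f T) : ℂ)) ^ 2)
        atTop (nhds (lam : ℂ)) := by
      have h := hcont.tendsto.comp hlimf
      rwa [hGL] at h
    have heq : (fun T : ℝ => innerC (f T) (H *ᵥ f T) / ((normC (f T) : ℂ)) ^ 2)
        = fun T : ℝ => innerC (A T) (H *ᵥ A T) / ((normC (A T) : ℂ)) ^ 2 := by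
      funext T
      have hr : ((Real.exp (T * lam) : ℝ) : ℂ) ≠ 0 := by
        exact_mod_cast (hexpTpos T).ne'
      have hfT : f T = ((Real.exp (T * lam) : ℝ) : ℂ) • A T := rfl
      rw [hnormf T, hfT, mulVec_smul, innerC_smul_right, innerC_smul_left,
        Complex.conj_ofReal]
      rw [Complex.ofReal_mul, mul_pow, ← mul_assoc, ← pow_two]
      exact mul_div_mul_left _ _ (pow_ne_zero 2 hr)
    rw [← heq]
    exact hmain
  refine ⟨part1, ?_, ?_⟩
  · rw [hPvL]
    exact part2
  · exact part3

end
end
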